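/- Let λ > 0 and let f, g, h : (0,∞)² → ℝ be smooth. Suppose the pair (ψ, A) given by the saddle ansatz solves the magnetic Ginzburg–Landau system on ℝ⁴ \ (Π₁ ∪ Π₂). Then on (0,∞)², writing fⱼ = ∂_{rⱼ}f etc., the triple (f, g, h) satisfies: (i) f₁₁ + f₂₂ + f₁/r₁ + f₂/r₂ − f(1−g)²/r₁² − f(1−h)²/r₂² − (λ/2)(f² − 1)f = 0; (ii) g₁₁ + g₂₂ − g₁/r₁ + g₂/r₂ + f² − f²g = 0; (iii) h₁₁ + h₂₂ + h₁/r₁ − h₂/r₂ + f² − f²h = 0. -/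

import Mathlib

/-!
It suffices to evaluate the system at the point `(a, 0, b, 0)`, where `r₁ = a`, `r₂ = b`,
`ψ = f` and `A = (0, g/a, 0, h/b)`. Write `ψ = f(r₁, r₂) • Θ` with the phase `Θ = z₁z₂/(r₁r₂)`,
and `A₁ = g(r₁, r₂) • x₁/r₁²`, `A₃ = h(r₁, r₂) • x₂/r₂²`. All Laplacians then follow from the
product rule, the Laplacian of a bi-radial function `Δ u(r₁, r₂) = u₁₁ + u₂₂ + u₁/r₁ + u₂/r₂`
and the harmonicity of `z₁z₂`. Each half of `A` is a bi-radial function times a rotation field,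
hence divergence free, so by the symmetry of second derivatives `d*dA = -ΔA` and no mixed partial
derivative has to be computed.
-/

noncomputable section

open Complex MeasureTheory

/-- ℝ⁴ with the Euclidean structure. -/
abbrev R4 : Type := EuclideanSpace ℝ (Fin 4)

/-- Standard basis vectors of ℝ⁴. -/
def bvec (j : Fin 4) : R4 := EuclideanSpace.single j 1

/-- `j`-th partial derivative. -/
def pd {E : Type*} [NormedAddCommGroup E] [NormedSpace ℝ E]
    (j : Fin 4) (f : R4 → E) (x : R4) : E :=
  fderiv ℝ f x (bvec j)

/-- Euclidean Laplacian Δf = Σⱼ ∂ⱼ∂ⱼ f. -/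
def lap {E : Type*} [NormedAddCommGroup E] [NormedSpace ℝ E]
    (f : R4 → E) (x : R4) : E :=
  ∑ j, pd j (pd j f) x

/-- The covariant Laplacian Δ_A ψ = Δψ − i (div A) ψ − 2i Σⱼ Aⱼ ∂ⱼψ − |A|² ψ. -/
def covLap (A : R4 → R4) (ψ : R4 → ℂ) (x : R4) : ℂ :=
  lap ψ x - Complex.I * (↑(∑ j, pd j (fun y => A y j) x)) * ψ x
    - 2 * Complex.I * ∑ j, (↑(A x j) : ℂ) * pd j ψ x
    - (↑(∑ j, (A x j) ^ 2) : ℂ) * ψ x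

/-- (d*dA)ⱼ = −Σₖ ∂ₖ(∂ₖAⱼ − ∂ⱼAₖ). -/
def dStarDA (A : R4 → R4) (j : Fin 4) (x : R4) : ℝ :=
  - ∑ k, pd k (fun y => pd k (fun z => A z j) y - pd j (fun z => A z k) y) x

/-- First complex coordinate z₁ = x₁ + i y₁. -/
def z1 (x : R4) : ℂ := ⟨x 0, x 1⟩
/-- Second complex coordinate z₂ = x₂ + i y₂. -/
def z2 (x : R4) : ℂ := ⟨x 2, x 3⟩
/-- r₁ = |z₁|. -/
def r1 (x : R4) : ℝ := ‖z1 x‖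
/-- r₂ = |z₂|. -/
def r2 (x : R4) : ℝ := ‖z2 x‖

/-- Π₁ = {(z₁, 0)}. -/
def Pi1 : Set R4 := {x | x 2 = 0 ∧ x 3 = 0}
/-- Π₂ = {(0, z₂)}. -/
def Pi2 : Set R4 := {x | x 0 = 0 ∧ x 1 = 0}

/-- Partial derivative in the first variable. -/
def d1 (f : ℝ → ℝ → ℝ) (a b : ℝ) : ℝ := deriv (fun t => f t b) a
/-- Partial derivative in the second variable. -/
def d2 (f : ℝ → ℝ → ℝ) (a b : ℝ) : ℝ := deriv (fun t => f a t) b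

/-- The saddle ansatz ψ = f(r₁,r₂) e^{i(θ₁+θ₂)}. -/
def saddlePsi (f : ℝ → ℝ → ℝ) (x : R4) : ℂ :=
  (↑(f (r1 x) (r2 x)) : ℂ) * (z1 x / (↑(r1 x) : ℂ)) * (z2 x / (↑(r2 x) : ℂ))

/-- The saddle ansatz A = g(r₁,r₂) dθ₁ + h(r₁,r₂) dθ₂, as a vector field. -/
def saddleA (g h : ℝ → ℝ → ℝ) (x : R4) : R4 :=
  (WithLp.equiv 2 (Fin 4 → ℝ)).symm
    ![ - g (r1 x) (r2 x) * x 1 / (r1 x) ^ 2,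
       g (r1 x) (r2 x) * x 0 / (r1 x) ^ 2,
       - h (r1 x) (r2 x) * x 3 / (r2 x) ^ 2,
       h (r1 x) (r2 x) * x 2 / (r2 x) ^ 2 ]

open Filter Topology Set Function
open scoped ContDiff

section PartialDerivatives

variable {E : Type*} [NormedAddCommGroup E] [NormedSpace ℝ E]

lemma bvec_apply (j i : Fin 4) : bvec j i = if j = i then 1 else 0 := by
  simp [bvec, PiLp.single_apply, eq_comm]

lemma HasFDerivAt.pd_eq {F : R4 → E} {L : R4 →L[ℝ] E} {x : R4} (hF : HasFDerivAt F L x)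
    (j : Fin 4) : pd j F x = L (bvec j) := by
  rw [pd, hF.fderiv]

lemma Filter.EventuallyEq.pd_eq {F G : R4 → E} {x : R4} (h : F =ᶠ[𝓝 x] G) (j : Fin 4) :
    pd j F x = pd j G x := by
  rw [pd, pd, h.fderiv_eq]

lemma pd_add {F G : R4 → E} {x : R4} (hF : DifferentiableAt ℝ F x)
    (hG : DifferentiableAt ℝ G x) (j : Fin 4) :
    pd j (fun y => F y + G y) x = pd j F x + pd j G x := by
  simp [pd, fderiv_fun_add hF hG]

lemma pd_sub {F G : R4 → E} {x : R4} (hF : DifferentiableAt ℝ F x)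
    (hG : DifferentiableAt ℝ G x) (j : Fin 4) :
    pd j (fun y => F y - G y) x = pd j F x - pd j G x := by
  simp [pd, fderiv_fun_sub hF hG]

lemma pd_sum {F : Fin 4 → R4 → E} {x : R4} (hF : ∀ k, DifferentiableAt ℝ (F k) x)
    (j : Fin 4) : pd j (fun y => ∑ k, F k y) x = ∑ k, pd j (F k) x := by
  simp [pd, fderiv_fun_sum (fun k _ => hF k)]

lemma pd_neg (F : R4 → E) (j : Fin 4) (x : R4) : pd j (fun y => -F y) x = -pd j F x := by
  simp [pd, fderiv_fun_neg]

lemma pd_smul {F : R4 → ℝ} {G : R4 → E} {x : R4} (hF : DifferentiableAt ℝ F x)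
    (hG : DifferentiableAt ℝ G x) (j : Fin 4) :
    pd j (fun y => F y • G y) x = pd j F x • G x + F x • pd j G x := by
  rw [(hF.hasFDerivAt.fun_smul hG.hasFDerivAt).pd_eq]
  simp [pd, add_comm]

lemma contDiffAt_pd {n : WithTop ℕ∞} {F : R4 → E} {x : R4} (hF : ContDiffAt ℝ (n + 1) F x)
    (j : Fin 4) : ContDiffAt ℝ n (pd j F) x :=
  (hF.fderiv_right le_rfl).clm_apply contDiffAt_const

lemma differentiableAt_pd {F : R4 → E} {x : R4} (hF : ContDiffAt ℝ 2 F x)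
    (j : Fin 4) : DifferentiableAt ℝ (pd j F) x :=
  (contDiffAt_pd (n := 1) hF j).differentiableAt one_ne_zero

lemma pd_pd_comm {F : R4 → E} {x : R4} (hF : ContDiffAt ℝ 2 F x) (j k : Fin 4) :
    pd k (pd j F) x = pd j (pd k F) x := by
  have hD : DifferentiableAt ℝ (fderiv ℝ F) x :=
    (hF.fderiv_right (m := 1) le_rfl).differentiableAt one_ne_zero
  have key : ∀ j k, pd k (pd j F) x = fderiv ℝ (fderiv ℝ F) x (bvec k) (bvec j) := by
    intro j k
    change fderiv ℝ (fun y => fderiv ℝ F y (bvec j)) x (bvec k) = _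
    rw [fderiv_clm_apply hD (differentiableAt_const _)]
    simp
  rw [key, key, (hF.isSymmSndFDerivAt (by simp)).eq]

lemma lap_smul {F : R4 → ℝ} {G : R4 → E} {x : R4} (hF : ContDiffAt ℝ 2 F x)
    (hG : ContDiffAt ℝ 2 G x) :
    lap (fun y => F y • G y) x
      = lap F x • G x + (2 : ℝ) • ∑ j, pd j F x • pd j G x + F x • lap G x := by
  have hFd := hF.differentiableAt two_ne_zero
  have hGd := hG.differentiableAt two_ne_zero
  have hpd : ∀ j, pd j (fun y => F y • G y) =ᶠ[𝓝 x]
      fun y => pd j F y • G y + F y • pd j G y := by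
    intro j
    filter_upwards [hF.eventually (by simp), hG.eventually (by simp)] with y hFy hGy
    exact pd_smul (hFy.differentiableAt two_ne_zero) (hGy.differentiableAt two_ne_zero) j
  simp only [lap, Finset.smul_sum, Finset.sum_smul, ← Finset.sum_add_distrib]
  refine Finset.sum_congr rfl fun j _ => ?_
  have hF' := differentiableAt_pd hF j
  have hG' := differentiableAt_pd hG j
  rw [(hpd j).pd_eq, pd_add (hF'.fun_smul hGd) (hFd.fun_smul hG'), pd_smul hF' hGd,
    pd_smul hFd hG']
  module

lemma pd_continuousLinearMap (L : R4 →L[ℝ] E) (j : Fin 4) (x : R4) : pd j L x = L (bvec j) :=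
  L.hasFDerivAt.pd_eq j

lemma pd_coord (i j : Fin 4) (x : R4) : pd j (fun y : R4 => y i) x = bvec j i :=
  pd_continuousLinearMap (EuclideanSpace.proj i) j x

lemma contDiff_coord {n : WithTop ℕ∞} (i : Fin 4) : ContDiff ℝ n fun y : R4 => y i := by
  fun_prop

lemma lap_coord (i : Fin 4) (x : R4) : lap (fun y : R4 => y i) x = 0 := by
  have hpd : ∀ j, pd j (fun y : R4 => y i) = fun _ => bvec j i := fun j => funext (pd_coord i j)
  simp [lap, hpd, pd]

def divergence (A : R4 → R4) (x : R4) : ℝ := ∑ k, pd k (fun y => A y k) x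

lemma dStarDA_eq {A : R4 → R4} {x : R4} (hA : ∀ k, ContDiffAt ℝ 2 (fun y => A y k) x)
    (j : Fin 4) : dStarDA A j x = pd j (divergence A) x - lap (fun y => A y j) x := by
  have hdiff : ∀ k l, DifferentiableAt ℝ (pd l fun y => A y k) x :=
    fun k l => differentiableAt_pd (hA k) l
  rw [dStarDA, show divergence A = fun y => ∑ k, pd k (fun z => A z k) y from rfl,
    pd_sum fun k => hdiff k k, lap, ← Finset.sum_sub_distrib, ← Finset.sum_neg_distrib]
  refine Finset.sum_congr rfl fun k _ => ?_
  rw [pd_sub (hdiff j k) (hdiff k j), pd_pd_comm (hA k) j k]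
  ring

end PartialDerivatives

section PlaneRadius

variable {i i' : Fin 4} {y : R4}

local notation "proj" => EuclideanSpace.proj (𝕜 := ℝ) (ι := Fin 4)

def planeRadius (i i' : Fin 4) (y : R4) : ℝ := √(y i ^ 2 + y i' ^ 2)

lemma r1_eq_planeRadius : r1 = planeRadius 0 1 := by
  funext y
  simp [r1, z1, planeRadius, Complex.norm_def, Complex.normSq_mk, sq]

lemma r2_eq_planeRadius : r2 = planeRadius 2 3 := by
  funext y
  simp [r2, z2, planeRadius, Complex.norm_def, Complex.normSq_mk, sq]

lemma planeRadius_sq (y : R4) : planeRadius i i' y ^ 2 = y i ^ 2 + y i' ^ 2 :=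
  Real.sq_sqrt (by positivity)

lemma planeRadius_pos_iff : 0 < planeRadius i i' y ↔ ¬(y i = 0 ∧ y i' = 0) := by
  rw [planeRadius, Real.sqrt_pos]
  constructor
  · rintro h ⟨h0, h1⟩
    simp [h0, h1] at h
  · intro h
    by_cases h0 : y i = 0
    · have h1 : y i' ≠ 0 := fun h1 => h ⟨h0, h1⟩
      positivity
    · positivity

lemma hasFDerivAt_planeRadius (hy : 0 < planeRadius i i' y) :
    HasFDerivAt (planeRadius i i')
      ((planeRadius i i' y)⁻¹ • (y i • proj i + y i' • proj i')) y := by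
  have hq : HasFDerivAt (fun y : R4 => y i * y i + y i' * y i')
      ((y i • proj i + y i • proj i) + (y i' • proj i' + y i' • proj i')) y :=
    ((proj i).hasFDerivAt.mul (proj i).hasFDerivAt).add
      ((proj i').hasFDerivAt.mul (proj i').hasFDerivAt)
  have hq0 : y i * y i + y i' * y i' ≠ 0 := by
    rw [← sq, ← sq, ← planeRadius_sq]; positivity
  have hρ : planeRadius i i' = fun y : R4 => √(y i * y i + y i' * y i') := by
    funext y; simp [planeRadius, sq]
  rw [hρ] at hy ⊢
  refine (hq.sqrt hq0).congr_fderiv ?_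
  ext v
  simp only [one_div, mul_inv_rev, smul_add, add_apply, smul_apply, PiLp.proj_apply, smul_eq_mul]
  field_simp
  ring

lemma pd_planeRadius (hy : 0 < planeRadius i i' y) (j : Fin 4) :
    pd j (planeRadius i i') y = (y i * bvec j i + y i' * bvec j i') / planeRadius i i' y := by
  rw [(hasFDerivAt_planeRadius hy).pd_eq]
  simp only [smul_add, add_apply, smul_apply, PiLp.proj_apply, smul_eq_mul]
  field_simp

lemma contDiffAt_planeRadius {n : WithTop ℕ∞} (hy : 0 < planeRadius i i' y) :
    ContDiffAt ℝ n (planeRadius i i') y :=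
  ContDiffAt.sqrt (by fun_prop) (by rw [← planeRadius_sq]; positivity)

lemma sum_bvec_mul_bvec (i k : Fin 4) : ∑ j, bvec j i * bvec j k = if i = k then 1 else 0 := by
  simp [bvec_apply, eq_comm]

lemma sum_pd_planeRadius_sq (hii' : i ≠ i') (hy : 0 < planeRadius i i' y) :
    ∑ j, pd j (planeRadius i i') y ^ 2 = 1 := by
  have key : ∑ j, (y i * bvec j i + y i' * bvec j i') ^ 2 = planeRadius i i' y ^ 2 := by
    simp only [add_sq, mul_pow, Finset.sum_add_distrib, ← Finset.mul_sum, sq (bvec _ _),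
      mul_assoc, mul_left_comm (bvec _ i) (y i'), sum_bvec_mul_bvec, planeRadius_sq]
    simp [hii']
  simp only [pd_planeRadius hy, div_pow, ← Finset.sum_div, key]
  exact div_self (by positivity)

lemma eventually_planeRadius_pos (hy : 0 < planeRadius i i' y) :
    ∀ᶠ z in 𝓝 y, 0 < planeRadius i i' z :=
  (contDiffAt_planeRadius (n := 0) hy).continuousAt.eventually (lt_mem_nhds hy)

lemma lap_planeRadius (hii' : i ≠ i') (hy : 0 < planeRadius i i' y) :
    lap (planeRadius i i') y = (planeRadius i i' y)⁻¹ := by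
  have hinv : HasFDerivAt (fun z => (planeRadius i i' z)⁻¹) _ y :=
    (hasFDerivAt_inv hy.ne').comp y (hasFDerivAt_planeRadius hy)
  have hlin := fun j => ((proj i).hasFDerivAt (x := y).mul_const (bvec j i)).add
      ((proj i').hasFDerivAt (x := y).mul_const (bvec j i'))
  have hpd : ∀ j, pd j (planeRadius i i') =ᶠ[𝓝 y]
      fun z => (z i * bvec j i + z i' * bvec j i') • (planeRadius i i' z)⁻¹ := by
    intro j
    filter_upwards [eventually_planeRadius_pos hy] with z hz
    rw [pd_planeRadius hz, smul_eq_mul, div_eq_mul_inv]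
  have hsq : ∑ j, (bvec j i * bvec j i + bvec j i' * bvec j i') = 2 := by
    simp only [Finset.sum_add_distrib, sum_bvec_mul_bvec]; norm_num
  have hgrad := sum_pd_planeRadius_sq hii' hy
  simp only [pd_planeRadius hy] at hgrad
  simp only [lap]
  rw [Finset.sum_congr rfl fun j _ => ((hpd j).pd_eq j).trans
    (pd_smul (hlin j).differentiableAt hinv.differentiableAt j)]
  simp only [(hlin _).pd_eq, hinv.pd_eq]
  calc _ = (∑ j, (bvec j i * bvec j i + bvec j i' * bvec j i')) * (planeRadius i i' y)⁻¹
        - (∑ j, ((y i * bvec j i + y i' * bvec j i') / planeRadius i i' y) ^ 2)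
          * (planeRadius i i' y)⁻¹ := by
        rw [Finset.sum_mul, Finset.sum_mul, ← Finset.sum_sub_distrib]
        refine Finset.sum_congr rfl fun j _ => ?_
        simp only [add_apply, smul_apply, PiLp.proj_apply, smul_eq_mul, Pi.add_apply, smul_add,
          ContinuousLinearMap.comp_add, ContinuousLinearMap.comp_smulₛₗ, map_inv₀,
          Real.ringHom_apply, ContinuousLinearMap.comp_apply,
          ContinuousLinearMap.toSpanSingleton_apply, mul_neg]
        field_simp
        ring
    _ = (planeRadius i i' y)⁻¹ := by rw [hsq, hgrad]; ring

end PlaneRadius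

section OffPlanes

def offPlanes : Set R4 := {y | 0 < r1 y ∧ 0 < r2 y}

variable {y : R4}

lemma mem_offPlanes_iff : y ∈ offPlanes ↔ y ∉ Pi1 ∪ Pi2 := by
  simp [offPlanes, Pi1, Pi2, r1_eq_planeRadius, r2_eq_planeRadius, planeRadius_pos_iff, and_comm]

lemma isOpen_offPlanes : IsOpen offPlanes := by
  have h1 : Continuous r1 := by rw [r1_eq_planeRadius]; unfold planeRadius; fun_prop
  have h2 : Continuous r2 := by rw [r2_eq_planeRadius]; unfold planeRadius; fun_prop
  exact (isOpen_lt continuous_const h1).inter (isOpen_lt continuous_const h2)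

lemma contDiffAt_r1 {n : WithTop ℕ∞} (hy : y ∈ offPlanes) : ContDiffAt ℝ n r1 y := by
  rw [r1_eq_planeRadius]; exact contDiffAt_planeRadius (r1_eq_planeRadius ▸ hy.1)

lemma contDiffAt_r2 {n : WithTop ℕ∞} (hy : y ∈ offPlanes) : ContDiffAt ℝ n r2 y := by
  rw [r2_eq_planeRadius]; exact contDiffAt_planeRadius (r2_eq_planeRadius ▸ hy.2)

lemma pd_r1 (hy : y ∈ offPlanes) (j : Fin 4) :
    pd j r1 y = (y 0 * bvec j 0 + y 1 * bvec j 1) / r1 y := by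
  rw [r1_eq_planeRadius]; exact pd_planeRadius (r1_eq_planeRadius ▸ hy.1) j

lemma pd_r2 (hy : y ∈ offPlanes) (j : Fin 4) :
    pd j r2 y = (y 2 * bvec j 2 + y 3 * bvec j 3) / r2 y := by
  rw [r2_eq_planeRadius]; exact pd_planeRadius (r2_eq_planeRadius ▸ hy.2) j

lemma sum_pd_r1_sq (hy : y ∈ offPlanes) : ∑ j, pd j r1 y ^ 2 = 1 := by
  rw [r1_eq_planeRadius]; exact sum_pd_planeRadius_sq (by decide) (r1_eq_planeRadius ▸ hy.1)

lemma sum_pd_r2_sq (hy : y ∈ offPlanes) : ∑ j, pd j r2 y ^ 2 = 1 := by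
  rw [r2_eq_planeRadius]; exact sum_pd_planeRadius_sq (by decide) (r2_eq_planeRadius ▸ hy.2)

lemma lap_r1 (hy : y ∈ offPlanes) : lap r1 y = (r1 y)⁻¹ := by
  rw [r1_eq_planeRadius]; exact lap_planeRadius (by decide) (r1_eq_planeRadius ▸ hy.1)

lemma lap_r2 (hy : y ∈ offPlanes) : lap r2 y = (r2 y)⁻¹ := by
  rw [r2_eq_planeRadius]; exact lap_planeRadius (by decide) (r2_eq_planeRadius ▸ hy.2)

lemma sum_pd_r1_mul_pd_r2 (hy : y ∈ offPlanes) : ∑ j, pd j r1 y * pd j r2 y = 0 := by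
  simp [pd_r1 hy, pd_r2 hy, Fin.sum_univ_four, bvec_apply]

end OffPlanes

section Biradial

def quadrant : Set (ℝ × ℝ) := Ioi 0 ×ˢ Ioi 0

def biradial (Φ : ℝ → ℝ → ℝ) (y : R4) : ℝ := Φ (r1 y) (r2 y)

variable {Φ : ℝ → ℝ → ℝ} {y : R4}

lemma d1_eq_fderiv {a b : ℝ} (hΦ : DifferentiableAt ℝ (uncurry Φ) (a, b)) :
    d1 Φ a b = fderiv ℝ (uncurry Φ) (a, b) (1, 0) := by
  have := hΦ.hasFDerivAt.comp_hasDerivAt a ((hasDerivAt_id' a).prodMk (hasDerivAt_const a b))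
  exact this.deriv

lemma d2_eq_fderiv {a b : ℝ} (hΦ : DifferentiableAt ℝ (uncurry Φ) (a, b)) :
    d2 Φ a b = fderiv ℝ (uncurry Φ) (a, b) (0, 1) :=
  (hΦ.hasFDerivAt.comp_hasDerivAt b ((hasDerivAt_const b a).prodMk (hasDerivAt_id' b))).deriv

lemma fderiv_uncurry_apply {a b : ℝ} (hΦ : DifferentiableAt ℝ (uncurry Φ) (a, b)) (u v : ℝ) :
    fderiv ℝ (uncurry Φ) (a, b) (u, v) = u * d1 Φ a b + v * d2 Φ a b := by
  have : ((u, v) : ℝ × ℝ) = u • ((1 : ℝ), (0 : ℝ)) + v • ((0 : ℝ), (1 : ℝ)) := by simp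
  rw [this, map_add, map_smul, map_smul, d1_eq_fderiv hΦ, d2_eq_fderiv hΦ, smul_eq_mul,
    smul_eq_mul]

lemma contDiffOn_uncurry_d1 (hΦ : ContDiffOn ℝ ∞ (uncurry Φ) quadrant) :
    ContDiffOn ℝ ∞ (uncurry (d1 Φ)) quadrant := by
  have hQ : IsOpen quadrant := isOpen_Ioi.prod isOpen_Ioi
  refine ((hΦ.fderiv_of_isOpen hQ le_rfl).clm_apply
    (contDiffOn_const (c := ((1 : ℝ), (0 : ℝ))))).congr ?_
  rintro ⟨a, b⟩ hab
  exact d1_eq_fderiv ((hΦ.contDiffAt (hQ.mem_nhds hab)).differentiableAt (by simp))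

lemma contDiffOn_uncurry_d2 (hΦ : ContDiffOn ℝ ∞ (uncurry Φ) quadrant) :
    ContDiffOn ℝ ∞ (uncurry (d2 Φ)) quadrant := by
  have hQ : IsOpen quadrant := isOpen_Ioi.prod isOpen_Ioi
  refine ((hΦ.fderiv_of_isOpen hQ le_rfl).clm_apply
    (contDiffOn_const (c := ((0 : ℝ), (1 : ℝ))))).congr ?_
  rintro ⟨a, b⟩ hab
  exact d2_eq_fderiv ((hΦ.contDiffAt (hQ.mem_nhds hab)).differentiableAt (by simp))

lemma contDiffAt_biradial {n : WithTop ℕ∞} (hΦ : ContDiffOn ℝ n (uncurry Φ) quadrant)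
    (hy : y ∈ offPlanes) : ContDiffAt ℝ n (biradial Φ) y :=
  (hΦ.contDiffAt ((isOpen_Ioi.prod isOpen_Ioi).mem_nhds hy)).comp y
    ((contDiffAt_r1 hy).prodMk (contDiffAt_r2 hy))

lemma pd_biradial (hΦ : ContDiffOn ℝ ∞ (uncurry Φ) quadrant) (hy : y ∈ offPlanes) (j : Fin 4) :
    pd j (biradial Φ) y
      = d1 Φ (r1 y) (r2 y) * pd j r1 y + d2 Φ (r1 y) (r2 y) * pd j r2 y := by
  have hΦy : DifferentiableAt ℝ (uncurry Φ) (r1 y, r2 y) :=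
    (hΦ.contDiffAt ((isOpen_Ioi.prod isOpen_Ioi).mem_nhds hy)).differentiableAt (by simp)
  have hr : HasFDerivAt (fun z => (r1 z, r2 z)) _ y :=
    ((contDiffAt_r1 (n := 1) hy).differentiableAt one_ne_zero).hasFDerivAt.prodMk
      ((contDiffAt_r2 (n := 1) hy).differentiableAt one_ne_zero).hasFDerivAt
  rw [show biradial Φ = uncurry Φ ∘ fun z => (r1 z, r2 z) from rfl,
    (hΦy.hasFDerivAt.comp y hr).pd_eq]
  simp [fderiv_uncurry_apply hΦy, pd, mul_comm]

lemma lap_biradial (hΦ : ContDiffOn ℝ ∞ (uncurry Φ) quadrant) (hy : y ∈ offPlanes) :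
    lap (biradial Φ) y = d1 (d1 Φ) (r1 y) (r2 y) + d2 (d2 Φ) (r1 y) (r2 y)
      + d1 Φ (r1 y) (r2 y) / r1 y + d2 Φ (r1 y) (r2 y) / r2 y := by
  have hΦ1 := contDiffOn_uncurry_d1 hΦ
  have hΦ2 := contDiffOn_uncurry_d2 hΦ
  have hpd : ∀ j, pd j (biradial Φ) =ᶠ[𝓝 y]
      fun z => biradial (d1 Φ) z • pd j r1 z + biradial (d2 Φ) z • pd j r2 z := by
    intro j
    filter_upwards [isOpen_offPlanes.mem_nhds hy] with z hz
    exact pd_biradial hΦ hz j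
  have hd1 := (contDiffAt_biradial hΦ1 hy).differentiableAt (by simp)
  have hd2 := (contDiffAt_biradial hΦ2 hy).differentiableAt (by simp)
  have hr1 := fun j => differentiableAt_pd (contDiffAt_r1 hy) j
  have hr2 := fun j => differentiableAt_pd (contDiffAt_r2 hy) j
  have hexp : ∀ j, pd j (pd j (biradial Φ)) y
      = d1 (d1 Φ) (r1 y) (r2 y) * pd j r1 y ^ 2 + d2 (d2 Φ) (r1 y) (r2 y) * pd j r2 y ^ 2
        + (d2 (d1 Φ) (r1 y) (r2 y) + d1 (d2 Φ) (r1 y) (r2 y)) * (pd j r1 y * pd j r2 y)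
        + d1 Φ (r1 y) (r2 y) * pd j (pd j r1) y + d2 Φ (r1 y) (r2 y) * pd j (pd j r2) y := by
    intro j
    rw [(hpd j).pd_eq, pd_add (hd1.fun_smul (hr1 j)) (hd2.fun_smul (hr2 j)),
      pd_smul hd1 (hr1 j), pd_smul hd2 (hr2 j), pd_biradial hΦ1 hy, pd_biradial hΦ2 hy]
    simp only [biradial, smul_eq_mul]
    ring
  have hlap1 : ∑ j, pd j (pd j r1) y = (r1 y)⁻¹ := lap_r1 hy
  have hlap2 : ∑ j, pd j (pd j r2) y = (r2 y)⁻¹ := lap_r2 hy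
  simp only [lap, hexp, Finset.sum_add_distrib, ← Finset.mul_sum, sum_pd_r1_sq hy,
    sum_pd_r2_sq hy, sum_pd_r1_mul_pd_r2 hy, hlap1, hlap2]
  ring

end Biradial

section AxisPoint

variable {Φ : ℝ → ℝ → ℝ} {a b : ℝ}

def axisPoint (a b : ℝ) : R4 := !₂[a, 0, b, 0]

@[simp] lemma axisPoint_zero : axisPoint a b 0 = a := rfl
@[simp] lemma axisPoint_one : axisPoint a b 1 = 0 := rfl
@[simp] lemma axisPoint_two : axisPoint a b 2 = b := rfl
@[simp] lemma axisPoint_three : axisPoint a b 3 = 0 := rfl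

lemma r1_axisPoint (ha : 0 < a) : r1 (axisPoint a b) = a := by
  simp [r1_eq_planeRadius, planeRadius, Real.sqrt_sq ha.le]

lemma r2_axisPoint (hb : 0 < b) : r2 (axisPoint a b) = b := by
  simp [r2_eq_planeRadius, planeRadius, Real.sqrt_sq hb.le]

lemma axisPoint_mem_offPlanes (ha : 0 < a) (hb : 0 < b) : axisPoint a b ∈ offPlanes := by
  simp [offPlanes, r1_axisPoint ha, r2_axisPoint hb, ha, hb]

lemma biradial_axisPoint (ha : 0 < a) (hb : 0 < b) : biradial Φ (axisPoint a b) = Φ a b := by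
  rw [biradial, r1_axisPoint ha, r2_axisPoint hb]

lemma pd_biradial_axisPoint (hΦ : ContDiffOn ℝ ∞ (uncurry Φ) quadrant) (ha : 0 < a) (hb : 0 < b)
    (j : Fin 4) :
    pd j (biradial Φ) (axisPoint a b) = d1 Φ a b * bvec j 0 + d2 Φ a b * bvec j 2 := by
  have hx := axisPoint_mem_offPlanes ha hb
  rw [pd_biradial hΦ hx, pd_r1 hx, pd_r2 hx, r1_axisPoint ha, r2_axisPoint hb]
  simp only [axisPoint_zero, axisPoint_one, axisPoint_two, axisPoint_three, zero_mul, add_zero]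
  field_simp

lemma lap_biradial_axisPoint (hΦ : ContDiffOn ℝ ∞ (uncurry Φ) quadrant) (ha : 0 < a)
    (hb : 0 < b) :
    lap (biradial Φ) (axisPoint a b)
      = d1 (d1 Φ) a b + d2 (d2 Φ) a b + d1 Φ a b / a + d2 Φ a b / b := by
  rw [lap_biradial hΦ (axisPoint_mem_offPlanes ha hb), r1_axisPoint ha, r2_axisPoint hb]

end AxisPoint

section PowMonomial

def powMonomial (p q : ℤ) (s t : ℝ) : ℝ := s ^ p * t ^ q

variable {p q : ℤ} {a b : ℝ}

lemma contDiffOn_powMonomial {n : WithTop ℕ∞} :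
    ContDiffOn ℝ n (uncurry (powMonomial p q)) quadrant :=
  (((analyticOn_fst (t := quadrant)).zpow fun _ hz => hz.1.ne').mul
    ((analyticOn_snd (t := quadrant)).zpow fun _ hz => hz.2.ne')).contDiffOn
    (isOpen_Ioi.prod isOpen_Ioi).uniqueDiffOn

lemma d1_powMonomial : d1 (powMonomial p q) = fun s t => (p : ℝ) * s ^ (p - 1) * t ^ q := by
  funext s t; simp [d1, powMonomial]

lemma d2_powMonomial : d2 (powMonomial p q) = fun s t => (q : ℝ) * s ^ p * t ^ (q - 1) := by
  funext s t
  simp only [d2, powMonomial, deriv_const_mul_field', deriv_zpow']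
  ring

lemma pd_biradial_powMonomial_axisPoint (ha : 0 < a) (hb : 0 < b) (j : Fin 4) :
    pd j (biradial (powMonomial p q)) (axisPoint a b)
      = p * a ^ (p - 1) * b ^ q * bvec j 0 + q * a ^ p * b ^ (q - 1) * bvec j 2 := by
  rw [pd_biradial_axisPoint contDiffOn_powMonomial ha hb, d1_powMonomial, d2_powMonomial]

lemma lap_biradial_powMonomial_axisPoint (ha : 0 < a) (hb : 0 < b) :
    lap (biradial (powMonomial p q)) (axisPoint a b)
      = p ^ 2 * a ^ (p - 2) * b ^ q + q ^ 2 * a ^ p * b ^ (q - 2) := by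
  rw [lap_biradial_axisPoint contDiffOn_powMonomial ha hb, d1_powMonomial, d2_powMonomial]
  have hpow : ∀ (c : ℝ) (k : ℤ), c ≠ 0 → c ^ (k - 1) = c ^ (k - 2) * c := fun c k hc => by
    rw [← zpow_add_one₀ hc]; ring_nf
  simp only [d1, d2, deriv_const_mul_field', deriv_mul_const_field', deriv_zpow]
  rw [show p - 1 - 1 = p - 2 by ring, show q - 1 - 1 = q - 2 by ring, hpow a p ha.ne',
    hpow b q hb.ne']
  field_simp
  push_cast
  ring

end PowMonomial

section SaddlePhase

variable {a b : ℝ}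

def planeCoordCLM (i i' : Fin 4) : R4 →L[ℝ] ℂ :=
  Complex.ofRealCLM.comp (EuclideanSpace.proj i) + (EuclideanSpace.proj i').smulRight Complex.I

lemma coe_planeCoordCLM_zero_one : ⇑(planeCoordCLM 0 1) = z1 := by
  funext y; apply Complex.ext <;> simp [planeCoordCLM, z1]

lemma coe_planeCoordCLM_two_three : ⇑(planeCoordCLM 2 3) = z2 := by
  funext y; apply Complex.ext <;> simp [planeCoordCLM, z2]

lemma z1_apply (y : R4) : z1 y = y 0 + y 1 * Complex.I := Complex.mk_eq_add_mul_I _ _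

lemma z2_apply (y : R4) : z2 y = y 2 + y 3 * Complex.I := Complex.mk_eq_add_mul_I _ _

lemma z1_axisPoint : z1 (axisPoint a b) = a := by
  apply Complex.ext <;> simp [z1]

lemma z2_axisPoint : z2 (axisPoint a b) = b := by
  apply Complex.ext <;> simp [z2]

lemma hasFDerivAt_z1z2 (y : R4) :
    HasFDerivAt (fun y => z1 y * z2 y) (z1 y • planeCoordCLM 2 3 + z2 y • planeCoordCLM 0 1) y := by
  rw [← coe_planeCoordCLM_zero_one, ← coe_planeCoordCLM_two_three]
  exact (planeCoordCLM 0 1).hasFDerivAt.mul (planeCoordCLM 2 3).hasFDerivAt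

lemma pd_z1z2 (j : Fin 4) (y : R4) :
    pd j (fun y => z1 y * z2 y) y = z1 y * z2 (bvec j) + z2 y * z1 (bvec j) := by
  rw [(hasFDerivAt_z1z2 y).pd_eq, ← coe_planeCoordCLM_zero_one, ← coe_planeCoordCLM_two_three]
  simp

lemma contDiff_z1z2 {n : WithTop ℕ∞} : ContDiff ℝ n fun y => z1 y * z2 y := by
  rw [← coe_planeCoordCLM_zero_one, ← coe_planeCoordCLM_two_three]
  exact (planeCoordCLM 0 1).contDiff.mul (planeCoordCLM 2 3).contDiff

lemma lap_z1z2 (y : R4) : lap (fun y => z1 y * z2 y) y = 0 := by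
  have hpd : ∀ j, pd j (fun y => z1 y * z2 y)
      = ⇑(z2 (bvec j) • planeCoordCLM 0 1 + z1 (bvec j) • planeCoordCLM 2 3) := by
    intro j; funext y
    rw [pd_z1z2, ← coe_planeCoordCLM_zero_one, ← coe_planeCoordCLM_two_three]
    simp [mul_comm]
  simp only [lap, hpd, pd_continuousLinearMap]
  simp [Fin.sum_univ_four, coe_planeCoordCLM_zero_one, coe_planeCoordCLM_two_three, z1, z2,
    bvec_apply, Complex.ext_iff]

-- `e^{i(θ₁+θ₂)} = z₁ z₂ / (r₁ r₂)`
def saddlePhase (y : R4) : ℂ := biradial (powMonomial (-1) (-1)) y • (z1 y * z2 y)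

lemma saddlePsi_eq_smul (f : ℝ → ℝ → ℝ) :
    saddlePsi f = fun y => biradial f y • saddlePhase y := by
  funext y
  simp only [saddlePsi, saddlePhase, biradial, powMonomial, Complex.real_smul]
  push_cast
  simp only [div_eq_mul_inv, zpow_neg, zpow_one]
  ring

lemma contDiffAt_saddlePhase {n : WithTop ℕ∞} {y : R4} (hy : y ∈ offPlanes) :
    ContDiffAt ℝ n saddlePhase y :=
  (contDiffAt_biradial contDiffOn_powMonomial hy).smul contDiff_z1z2.contDiffAt

lemma saddlePhase_axisPoint (ha : 0 < a) (hb : 0 < b) : saddlePhase (axisPoint a b) = 1 := by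
  have ha' : (a : ℂ) ≠ 0 := by exact_mod_cast ha.ne'
  have hb' : (b : ℂ) ≠ 0 := by exact_mod_cast hb.ne'
  rw [saddlePhase, biradial_axisPoint ha hb, z1_axisPoint, z2_axisPoint, powMonomial,
    Complex.real_smul]
  push_cast
  field_simp

lemma pd_saddlePhase_axisPoint (ha : 0 < a) (hb : 0 < b) (j : Fin 4) :
    pd j saddlePhase (axisPoint a b) = ((bvec j 1 / a + bvec j 3 / b : ℝ) : ℂ) * Complex.I := by
  have hx := axisPoint_mem_offPlanes ha hb
  rw [show saddlePhase = fun y => biradial (powMonomial (-1) (-1)) y • (z1 y * z2 y) from rfl,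
    pd_smul ((contDiffAt_biradial contDiffOn_powMonomial hx).differentiableAt one_ne_zero)
      ((contDiff_z1z2 (n := 1)).differentiable one_ne_zero _) j,
    pd_biradial_powMonomial_axisPoint ha hb, pd_z1z2, biradial_axisPoint ha hb, z1_axisPoint,
    z2_axisPoint, z1_apply (bvec j), z2_apply (bvec j)]
  have ha' : (a : ℂ) ≠ 0 := by exact_mod_cast ha.ne'
  have hb' : (b : ℂ) ≠ 0 := by exact_mod_cast hb.ne'
  simp only [powMonomial, Complex.real_smul]
  push_cast
  field_simp
  ring

lemma lap_saddlePhase_axisPoint (ha : 0 < a) (hb : 0 < b) :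
    lap saddlePhase (axisPoint a b) = ((-(a ^ 2)⁻¹ - (b ^ 2)⁻¹ : ℝ) : ℂ) := by
  have hx := axisPoint_mem_offPlanes ha hb
  rw [show saddlePhase = fun y => biradial (powMonomial (-1) (-1)) y • (z1 y * z2 y) from rfl,
    lap_smul (contDiffAt_biradial contDiffOn_powMonomial hx) contDiff_z1z2.contDiffAt,
    lap_z1z2, lap_biradial_powMonomial_axisPoint ha hb, biradial_axisPoint ha hb, z1_axisPoint,
    z2_axisPoint]
  simp only [pd_biradial_powMonomial_axisPoint ha hb, pd_z1z2, z1_axisPoint, z2_axisPoint,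
    z1_apply (bvec _), z2_apply (bvec _), Fin.sum_univ_four, bvec_apply, Fin.isValue, Fin.reduceEq,
    ↓reduceIte, powMonomial, Complex.real_smul]
  have ha' : (a : ℂ) ≠ 0 := by exact_mod_cast ha.ne'
  have hb' : (b : ℂ) ≠ 0 := by exact_mod_cast hb.ne'
  push_cast
  field_simp
  ring

end SaddlePhase

section BiradialTimesCoord

variable {Φ : ℝ → ℝ → ℝ} {y : R4}

lemma lap_biradial_smul_coord (hΦ : ContDiffOn ℝ ∞ (uncurry Φ) quadrant) (hy : y ∈ offPlanes)
    (i : Fin 4) :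
    lap (fun y => biradial Φ y • y i) y = lap (biradial Φ) y * y i + 2 * pd i (biradial Φ) y := by
  rw [lap_smul ((contDiffAt_biradial hΦ hy).of_le (WithTop.coe_le_coe.2 le_top))
    (contDiff_coord i).contDiffAt, lap_coord]
  simp [pd_coord, bvec_apply]

lemma pd_rotational_field_plane1 (hΦ : ContDiffOn ℝ ∞ (uncurry Φ) quadrant)
    (hy : y ∈ offPlanes) :
    pd 0 (fun y => -(biradial Φ y • y 1)) y + pd 1 (fun y => biradial Φ y • y 0) y = 0 := by
  have hd := (contDiffAt_biradial hΦ hy).differentiableAt (by simp)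
  rw [pd_neg, pd_smul hd ((contDiff_coord (n := 1) 1).differentiable one_ne_zero _),
    pd_smul hd ((contDiff_coord (n := 1) 0).differentiable one_ne_zero _), pd_biradial hΦ hy,
    pd_biradial hΦ hy, pd_r1 hy, pd_r2 hy, pd_r1 hy, pd_r2 hy]
  simp only [pd_coord, bvec_apply, Fin.isValue, Fin.reduceEq, ↓reduceIte, smul_eq_mul]
  ring

lemma pd_rotational_field_plane2 (hΦ : ContDiffOn ℝ ∞ (uncurry Φ) quadrant)
    (hy : y ∈ offPlanes) :
    pd 2 (fun y => -(biradial Φ y • y 3)) y + pd 3 (fun y => biradial Φ y • y 2) y = 0 := by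
  have hd := (contDiffAt_biradial hΦ hy).differentiableAt (by simp)
  rw [pd_neg, pd_smul hd ((contDiff_coord (n := 1) 3).differentiable one_ne_zero _),
    pd_smul hd ((contDiff_coord (n := 1) 2).differentiable one_ne_zero _), pd_biradial hΦ hy,
    pd_biradial hΦ hy, pd_r1 hy, pd_r2 hy, pd_r1 hy, pd_r2 hy]
  simp only [pd_coord, bvec_apply, Fin.isValue, Fin.reduceEq, ↓reduceIte, smul_eq_mul]
  ring

end BiradialTimesCoord

section SaddleAnsatz

variable {f g h : ℝ → ℝ → ℝ} {a b : ℝ} {y : R4}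

lemma saddlePsi_axisPoint (ha : 0 < a) (hb : 0 < b) : saddlePsi f (axisPoint a b) = f a b := by
  simp [saddlePsi_eq_smul, biradial_axisPoint ha hb, saddlePhase_axisPoint ha hb]

lemma pd_saddlePsi_axisPoint (hf : ContDiffOn ℝ ∞ (uncurry f) quadrant) (ha : 0 < a)
    (hb : 0 < b) (j : Fin 4) :
    pd j (saddlePsi f) (axisPoint a b) = ((d1 f a b * bvec j 0 + d2 f a b * bvec j 2 : ℝ) : ℂ)
      + ((f a b * (bvec j 1 / a + bvec j 3 / b) : ℝ) : ℂ) * Complex.I := by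
  have hx := axisPoint_mem_offPlanes ha hb
  rw [saddlePsi_eq_smul, pd_smul ((contDiffAt_biradial hf hx).differentiableAt (by simp))
      ((contDiffAt_saddlePhase (n := 1) hx).differentiableAt one_ne_zero),
    pd_biradial_axisPoint hf ha hb, pd_saddlePhase_axisPoint ha hb, biradial_axisPoint ha hb,
    saddlePhase_axisPoint ha hb]
  simp only [Complex.real_smul]
  push_cast
  ring

lemma lap_saddlePsi_axisPoint (hf : ContDiffOn ℝ ∞ (uncurry f) quadrant) (ha : 0 < a)
    (hb : 0 < b) :
    lap (saddlePsi f) (axisPoint a b) = ((d1 (d1 f) a b + d2 (d2 f) a b + d1 f a b / a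
      + d2 f a b / b - f a b * ((a ^ 2)⁻¹ + (b ^ 2)⁻¹) : ℝ) : ℂ) := by
  have hx := axisPoint_mem_offPlanes ha hb
  rw [saddlePsi_eq_smul, lap_smul ((contDiffAt_biradial hf hx).of_le (WithTop.coe_le_coe.2 le_top))
    (contDiffAt_saddlePhase hx), lap_biradial_axisPoint hf ha hb, saddlePhase_axisPoint ha hb,
    lap_saddlePhase_axisPoint ha hb, biradial_axisPoint ha hb]
  simp only [pd_biradial_axisPoint hf ha hb, pd_saddlePhase_axisPoint ha hb, Fin.sum_univ_four,
    bvec_apply, Fin.isValue, Fin.reduceEq, ↓reduceIte, Complex.real_smul]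
  push_cast
  ring

def divSqFst (g : ℝ → ℝ → ℝ) (s t : ℝ) : ℝ := g s t / s ^ 2

def divSqSnd (h : ℝ → ℝ → ℝ) (s t : ℝ) : ℝ := h s t / t ^ 2

lemma contDiffOn_divSqFst (hg : ContDiffOn ℝ ∞ (uncurry g) quadrant) :
    ContDiffOn ℝ ∞ (uncurry (divSqFst g)) quadrant :=
  hg.div (contDiffOn_fst.pow 2) fun _ hz => pow_ne_zero 2 (ne_of_gt hz.1)

lemma contDiffOn_divSqSnd (hh : ContDiffOn ℝ ∞ (uncurry h) quadrant) :
    ContDiffOn ℝ ∞ (uncurry (divSqSnd h)) quadrant :=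
  hh.div (contDiffOn_snd.pow 2) fun _ hz => pow_ne_zero 2 (ne_of_gt hz.2)

lemma saddleA_apply_zero :
    (fun y => saddleA g h y 0) = fun y => -(biradial (divSqFst g) y • y 1) := by
  funext y
  simp only [saddleA, WithLp.equiv_symm_apply, Matrix.cons_val, biradial, divSqFst, smul_eq_mul]
  ring

lemma saddleA_apply_one :
    (fun y => saddleA g h y 1) = fun y => biradial (divSqFst g) y • y 0 := by
  funext y
  simp only [saddleA, WithLp.equiv_symm_apply, Matrix.cons_val, biradial, divSqFst, smul_eq_mul]
  ring

lemma saddleA_apply_two :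
    (fun y => saddleA g h y 2) = fun y => -(biradial (divSqSnd h) y • y 3) := by
  funext y
  simp only [saddleA, WithLp.equiv_symm_apply, Matrix.cons_val, biradial, divSqSnd, smul_eq_mul]
  ring

lemma saddleA_apply_three :
    (fun y => saddleA g h y 3) = fun y => biradial (divSqSnd h) y • y 2 := by
  funext y
  simp only [saddleA, WithLp.equiv_symm_apply, Matrix.cons_val, biradial, divSqSnd, smul_eq_mul]
  ring

lemma contDiffAt_saddleA_apply (hg : ContDiffOn ℝ ∞ (uncurry g) quadrant)
    (hh : ContDiffOn ℝ ∞ (uncurry h) quadrant) (hy : y ∈ offPlanes) (k : Fin 4) :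
    ContDiffAt ℝ 2 (fun y => saddleA g h y k) y := by
  have hG : ContDiffAt ℝ 2 (biradial (divSqFst g)) y :=
    (contDiffAt_biradial (contDiffOn_divSqFst hg) hy).of_le (WithTop.coe_le_coe.2 le_top)
  have hH : ContDiffAt ℝ 2 (biradial (divSqSnd h)) y :=
    (contDiffAt_biradial (contDiffOn_divSqSnd hh) hy).of_le (WithTop.coe_le_coe.2 le_top)
  match k with
  | 0 => rw [saddleA_apply_zero]; exact (hG.fun_smul (contDiff_coord 1).contDiffAt).neg
  | 1 => rw [saddleA_apply_one]; exact hG.fun_smul (contDiff_coord 0).contDiffAt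
  | 2 => rw [saddleA_apply_two]; exact (hH.fun_smul (contDiff_coord 3).contDiffAt).neg
  | 3 => rw [saddleA_apply_three]; exact hH.fun_smul (contDiff_coord 2).contDiffAt

lemma divergence_saddleA (hg : ContDiffOn ℝ ∞ (uncurry g) quadrant)
    (hh : ContDiffOn ℝ ∞ (uncurry h) quadrant) (hy : y ∈ offPlanes) :
    divergence (saddleA g h) y = 0 := by
  rw [divergence, Fin.sum_univ_four, saddleA_apply_zero, saddleA_apply_one, saddleA_apply_two,
    saddleA_apply_three, pd_rotational_field_plane1 (contDiffOn_divSqFst hg) hy, zero_add,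
    pd_rotational_field_plane2 (contDiffOn_divSqSnd hh) hy]

lemma lap_saddleA_apply_one_axisPoint (hg : ContDiffOn ℝ ∞ (uncurry g) quadrant) (ha : 0 < a)
    (hb : 0 < b) :
    lap (fun y => saddleA g h y 1) (axisPoint a b)
      = (d1 (d1 g) a b + d2 (d2 g) a b - d1 g a b / a + d2 g a b / b) / a := by
  have hx := axisPoint_mem_offPlanes ha hb
  have hP : ContDiffAt ℝ 2 (biradial (powMonomial (-2) 0)) (axisPoint a b) :=
    contDiffAt_biradial contDiffOn_powMonomial hx
  rw [show (fun y => saddleA g h y 1)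
      = fun y => biradial g y • (biradial (powMonomial (-2) 0) y • y 0) by
    rw [saddleA_apply_one]; funext y
    simp only [biradial, divSqFst, powMonomial, smul_eq_mul, zpow_neg, zpow_ofNat, pow_zero]
    ring,
    lap_smul ((contDiffAt_biradial hg hx).of_le (WithTop.coe_le_coe.2 le_top))
      (hP.fun_smul (contDiff_coord 0).contDiffAt),
    lap_biradial_smul_coord contDiffOn_powMonomial hx 0, lap_biradial_axisPoint hg ha hb,
    lap_biradial_powMonomial_axisPoint ha hb]
  simp only [pd_smul (hP.differentiableAt two_ne_zero) ((contDiff_coord (n := 1) 0).differentiable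
      one_ne_zero _), pd_coord, pd_biradial_axisPoint hg ha hb,
    pd_biradial_powMonomial_axisPoint ha hb, biradial_axisPoint ha hb, Fin.sum_univ_four,
    bvec_apply, Fin.isValue, Fin.reduceEq, ↓reduceIte, powMonomial, axisPoint_zero]
  simp only [smul_eq_mul, Int.reduceNeg, Int.reduceSub, Int.cast_neg, Int.cast_ofNat, zpow_neg,
    zpow_ofNat]
  field_simp
  ring

lemma lap_saddleA_apply_three_axisPoint (hh : ContDiffOn ℝ ∞ (uncurry h) quadrant) (ha : 0 < a)
    (hb : 0 < b) :
    lap (fun y => saddleA g h y 3) (axisPoint a b)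
      = (d1 (d1 h) a b + d2 (d2 h) a b + d1 h a b / a - d2 h a b / b) / b := by
  have hx := axisPoint_mem_offPlanes ha hb
  have hP : ContDiffAt ℝ 2 (biradial (powMonomial 0 (-2))) (axisPoint a b) :=
    contDiffAt_biradial contDiffOn_powMonomial hx
  rw [show (fun y => saddleA g h y 3)
      = fun y => biradial h y • (biradial (powMonomial 0 (-2)) y • y 2) by
    rw [saddleA_apply_three]; funext y
    simp only [biradial, divSqSnd, powMonomial, smul_eq_mul, zpow_neg, zpow_ofNat, pow_zero]
    ring,
    lap_smul ((contDiffAt_biradial hh hx).of_le (WithTop.coe_le_coe.2 le_top))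
      (hP.fun_smul (contDiff_coord 2).contDiffAt),
    lap_biradial_smul_coord contDiffOn_powMonomial hx 2, lap_biradial_axisPoint hh ha hb,
    lap_biradial_powMonomial_axisPoint ha hb]
  simp only [pd_smul (hP.differentiableAt two_ne_zero) ((contDiff_coord (n := 1) 2).differentiable
      one_ne_zero _), pd_coord, pd_biradial_axisPoint hh ha hb,
    pd_biradial_powMonomial_axisPoint ha hb, biradial_axisPoint ha hb, Fin.sum_univ_four,
    bvec_apply, Fin.isValue, Fin.reduceEq, ↓reduceIte, powMonomial, axisPoint_two]
  simp only [smul_eq_mul, Int.reduceNeg, Int.reduceSub, Int.cast_neg, Int.cast_ofNat, zpow_neg,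
    zpow_ofNat]
  field_simp
  ring

lemma pd_divergence_saddleA_axisPoint (hg : ContDiffOn ℝ ∞ (uncurry g) quadrant)
    (hh : ContDiffOn ℝ ∞ (uncurry h) quadrant) (ha : 0 < a) (hb : 0 < b) (j : Fin 4) :
    pd j (divergence (saddleA g h)) (axisPoint a b) = 0 := by
  have hzero : divergence (saddleA g h) =ᶠ[𝓝 (axisPoint a b)] fun _ => 0 := by
    filter_upwards [isOpen_offPlanes.mem_nhds (axisPoint_mem_offPlanes ha hb)] with y hy
    exact divergence_saddleA hg hh hy
  rw [hzero.pd_eq]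
  simp [pd]

lemma dStarDA_saddleA_one_axisPoint (hg : ContDiffOn ℝ ∞ (uncurry g) quadrant)
    (hh : ContDiffOn ℝ ∞ (uncurry h) quadrant) (ha : 0 < a) (hb : 0 < b) :
    dStarDA (saddleA g h) 1 (axisPoint a b)
      = -(d1 (d1 g) a b + d2 (d2 g) a b - d1 g a b / a + d2 g a b / b) / a := by
  rw [dStarDA_eq (contDiffAt_saddleA_apply hg hh (axisPoint_mem_offPlanes ha hb)),
    pd_divergence_saddleA_axisPoint hg hh ha hb, lap_saddleA_apply_one_axisPoint hg ha hb]
  ring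

lemma dStarDA_saddleA_three_axisPoint (hg : ContDiffOn ℝ ∞ (uncurry g) quadrant)
    (hh : ContDiffOn ℝ ∞ (uncurry h) quadrant) (ha : 0 < a) (hb : 0 < b) :
    dStarDA (saddleA g h) 3 (axisPoint a b)
      = -(d1 (d1 h) a b + d2 (d2 h) a b + d1 h a b / a - d2 h a b / b) / b := by
  rw [dStarDA_eq (contDiffAt_saddleA_apply hg hh (axisPoint_mem_offPlanes ha hb)),
    pd_divergence_saddleA_axisPoint hg hh ha hb, lap_saddleA_apply_three_axisPoint hh ha hb]
  ring

lemma saddleA_axisPoint (ha : 0 < a) (hb : 0 < b) (j : Fin 4) :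
    saddleA g h (axisPoint a b) j = bvec j 1 * (g a b / a) + bvec j 3 * (h a b / b) := by
  fin_cases j <;> simp [saddleA, bvec_apply, r1_axisPoint ha, r2_axisPoint hb, sq,
    mul_div_mul_right _ _ ha.ne', mul_div_mul_right _ _ hb.ne']

lemma covLap_saddle_axisPoint (hf : ContDiffOn ℝ ∞ (uncurry f) quadrant)
    (hg : ContDiffOn ℝ ∞ (uncurry g) quadrant) (hh : ContDiffOn ℝ ∞ (uncurry h) quadrant)
    (ha : 0 < a) (hb : 0 < b) :
    covLap (saddleA g h) (saddlePsi f) (axisPoint a b)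
      = ((d1 (d1 f) a b + d2 (d2 f) a b + d1 f a b / a + d2 f a b / b
          - f a b * (1 - g a b) ^ 2 / a ^ 2 - f a b * (1 - h a b) ^ 2 / b ^ 2 : ℝ) : ℂ) := by
  rw [covLap, show ∑ j, pd j (fun y => saddleA g h y j) (axisPoint a b)
      = divergence (saddleA g h) (axisPoint a b) from rfl,
    divergence_saddleA hg hh (axisPoint_mem_offPlanes ha hb), lap_saddlePsi_axisPoint hf ha hb,
    saddlePsi_axisPoint ha hb]
  simp only [Fin.sum_univ_four, saddleA_axisPoint ha hb, pd_saddlePsi_axisPoint hf ha hb,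
    bvec_apply, Fin.isValue, Fin.reduceEq, ↓reduceIte]
  push_cast
  linear_combination (-2 * (f a b * g a b / a ^ 2 + f a b * h a b / b ^ 2 : ℂ)) * Complex.I_sq

lemma saddleCurrent_axisPoint (hf : ContDiffOn ℝ ∞ (uncurry f) quadrant) (ha : 0 < a)
    (hb : 0 < b) (j : Fin 4) :
    ((pd j (saddlePsi f) (axisPoint a b)
        - Complex.I * (saddleA g h (axisPoint a b) j) * saddlePsi f (axisPoint a b))
      * (starRingEnd ℂ) (saddlePsi f (axisPoint a b))).im
      = f a b ^ 2 * (bvec j 1 * (1 - g a b) / a + bvec j 3 * (1 - h a b) / b) := by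
  rw [pd_saddlePsi_axisPoint hf ha hb, saddlePsi_axisPoint ha hb, saddleA_axisPoint ha hb,
    Complex.conj_ofReal]
  simp only [Complex.mul_im, Complex.mul_re, Complex.sub_im, Complex.sub_re, Complex.add_im,
    Complex.add_re, Complex.ofReal_re, Complex.ofReal_im, Complex.I_re, Complex.I_im]
  ring

end SaddleAnsatz

theorem saddle_ansatz_reduction (lam : ℝ) (f g h : ℝ → ℝ → ℝ)
    (hf : ContDiffOn ℝ (⊤ : ℕ∞) (Function.uncurry f) (Set.Ioi 0 ×ˢ Set.Ioi 0))
    (hg : ContDiffOn ℝ (⊤ : ℕ∞) (Function.uncurry g) (Set.Ioi 0 ×ˢ Set.Ioi 0))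
    (hh : ContDiffOn ℝ (⊤ : ℕ∞) (Function.uncurry h) (Set.Ioi 0 ×ˢ Set.Ioi 0))
    (heq1 : ∀ x : R4, x ∉ Pi1 ∪ Pi2 →
      -covLap (saddleA g h) (saddlePsi f) x
        + (((lam / 2 * (‖saddlePsi f x‖ ^ 2 - 1) : ℝ)) : ℂ) * saddlePsi f x = 0)
    (heq2 : ∀ x : R4, x ∉ Pi1 ∪ Pi2 → ∀ j : Fin 4,
      dStarDA (saddleA g h) j x =
        ((pd j (saddlePsi f) x - Complex.I * (↑(saddleA g h x j)) * saddlePsi f x)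
          * (starRingEnd ℂ) (saddlePsi f x)).im) :
    ∀ a b : ℝ, 0 < a → 0 < b →
      (d1 (d1 f) a b + d2 (d2 f) a b + d1 f a b / a + d2 f a b / b
        - f a b * (1 - g a b) ^ 2 / a ^ 2 - f a b * (1 - h a b) ^ 2 / b ^ 2
        - lam / 2 * ((f a b) ^ 2 - 1) * f a b = 0) ∧
      (d1 (d1 g) a b + d2 (d2 g) a b - d1 g a b / a + d2 g a b / b
        + (f a b) ^ 2 - (f a b) ^ 2 * g a b = 0) ∧
      (d1 (d1 h) a b + d2 (d2 h) a b + d1 h a b / a - d2 h a b / b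
        + (f a b) ^ 2 - (f a b) ^ 2 * h a b = 0) := by
  intro a b ha hb
  have hx := mem_offPlanes_iff.1 (axisPoint_mem_offPlanes ha hb)
  have hGL := heq1 _ hx
  have hM1 := heq2 _ hx 1
  have hM3 := heq2 _ hx 3
  rw [covLap_saddle_axisPoint hf hg hh ha hb, saddlePsi_axisPoint ha hb, Complex.norm_real,
    Real.norm_eq_abs, sq_abs] at hGL
  rw [dStarDA_saddleA_one_axisPoint hg hh ha hb, saddleCurrent_axisPoint hf ha hb] at hM1
  rw [dStarDA_saddleA_three_axisPoint hg hh ha hb, saddleCurrent_axisPoint hf ha hb] at hM3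
  norm_cast at hGL
  simp only [bvec_apply, Fin.isValue, Fin.reduceEq, ↓reduceIte] at hM1 hM3
  refine ⟨?_, ?_, ?_⟩
  · linear_combination -hGL
  · linear_combination (norm := (field_simp; ring)) (-a) * hM1
  · linear_combination (norm := (field_simp; ring)) (-b) * hM3

end
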